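/- (kMTTC theorem) Let V be a finite set of trips, 𝓛 a family of subsets of V each of cardinality at least 2, c : V → ℝ a cost function on single trips, and ccomb a cost function on the hyper-links in 𝓛. Weight each L ∈ 𝓛 by w^c(L) = (∑_{v∈L} c(v)) − ccomb(L). Define the total cost of a feasible trip set P as the sum of c(v) over singleton parts {v} of P plus the sum of ccomb(L) over non-singleton parts L of P. Then the minimum total cost over all feasible trip sets equals (∑_{v∈V} c(v)) − W, where W is the maximum, over all matchings M of 𝓛, of ∑_{L∈M} w^c(L). -/

import Mathlib

/-!
Splitting a trip set into its singleton parts and the rest shows that its cost is `∑ v, c v`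
minus the weight of its non-singleton parts, and these form a matching of `𝓛`. Conversely,
a matching filled up with singletons is a feasible trip set whose non-singleton parts are
exactly the matching, since hyper-links have at least two elements. So the minimum cost and
the maximum weight are attained by corresponding objects.
-/

open Finset

/-- A feasible trip set for a shareability hyper-network `𝓛`: a partition of the trip set
`V` in which every part is either a singleton or a hyper-link of `𝓛`. -/
def IsFeasibleHyperTripSet {V : Type*} [Fintype V] [DecidableEq V]
    (𝓛 : Finset (Finset V)) (P : Finpartition (univ : Finset V)) : Prop :=
  ∀ p ∈ P.parts, (∃ v : V, p = {v}) ∨ p ∈ 𝓛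

/-- A matching of the hyper-network `𝓛`: a subset of `𝓛` whose members are pairwise
disjoint. -/
def IsHyperMatching {V : Type*} (𝓛 M : Finset (Finset V)) : Prop :=
  M ⊆ 𝓛 ∧ (M : Set (Finset V)).Pairwise Disjoint

/-- The total cost of a feasible trip set: the sum of `c v` over the singleton parts `{v}`
plus the sum of `ccomb L` over the non-singleton parts `L`. -/
def hyperTripSetCost {V : Type*} [Fintype V] [DecidableEq V]
    (c : V → ℝ) (ccomb : Finset V → ℝ) (P : Finpartition (univ : Finset V)) : ℝ :=
  ∑ p ∈ P.parts, if p.card = 1 then ∑ v ∈ p, c v else ccomb p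

namespace Finpartition

def disjUnion {α : Type*} [DistribLattice α] [OrderBot α] [DecidableEq α] {a b : α}
    (P : Finpartition a) (Q : Finpartition b) (hab : Disjoint a b) : Finpartition (a ⊔ b) where
  parts := P.parts ∪ Q.parts
  supIndep := by
    rw [supIndep_iff_pairwiseDisjoint, coe_union]
    exact P.supIndep.pairwiseDisjoint.union Q.supIndep.pairwiseDisjoint
      fun p hp q hq _ ↦ hab.mono (P.le hp) (Q.le hq)
  sup_parts := by rw [sup_union, P.sup_parts, Q.sup_parts]
  bot_notMem := by simp [P.bot_notMem, Q.bot_notMem]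

theorem sum_sum_parts {α M : Type*} [DecidableEq α] [AddCommMonoid M] {s : Finset α}
    (P : Finpartition s) (f : α → M) : ∑ p ∈ P.parts, ∑ i ∈ p, f i = ∑ i ∈ s, f i := by
  have h := sum_biUnion (f := f) P.supIndep.pairwiseDisjoint
  rw [P.biUnion_parts] at h
  exact h.symm

end Finpartition

section HyperTripSet

variable {V : Type*} [Fintype V] [DecidableEq V]

theorem hyperTripSetCost_eq_sum_sub_sum_filter (c : V → ℝ) (ccomb : Finset V → ℝ)
    (P : Finpartition (univ : Finset V)) :
    hyperTripSetCost c ccomb P =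
      ∑ v, c v - ∑ L ∈ P.parts with L.card ≠ 1, ((∑ v ∈ L, c v) - ccomb L) := by
  rw [hyperTripSetCost, ← P.sum_sum_parts, sum_filter, ← sum_sub_distrib]
  refine sum_congr rfl fun p _ ↦ ?_
  split_ifs <;> simp_all

def matchingFinpartition (M : Finset (Finset V))
    (hM : (M : Set (Finset V)).PairwiseDisjoint id) : Finpartition (univ : Finset V) :=
  ((Finpartition.ofPairwiseDisjoint M hM).disjUnion ⊥ disjoint_sdiff_self_right).copy
    (union_sdiff_of_subset (subset_univ _))

theorem matchingFinpartition_parts (M : Finset (Finset V))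
    (hM : (M : Set (Finset V)).PairwiseDisjoint id) :
    (matchingFinpartition M hM).parts = M.erase ∅ ∪ (⊥ : Finpartition (univ \ M.sup id)).parts :=
  rfl

theorem mem_matchingFinpartition_parts {M : Finset (Finset V)}
    {hM : (M : Set (Finset V)).PairwiseDisjoint id} {p : Finset V}
    (hp : p ∈ (matchingFinpartition M hM).parts) : p ∈ M ∨ ∃ v, p = {v} := by
  rw [matchingFinpartition_parts, mem_union, Finpartition.mem_bot_iff] at hp
  rcases hp with hp | ⟨v, -, rfl⟩
  · exact .inl (mem_of_mem_erase hp)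
  · exact .inr ⟨v, rfl⟩

theorem IsHyperMatching.isFeasibleHyperTripSet {𝓛 M : Finset (Finset V)}
    (hM : IsHyperMatching 𝓛 M) : IsFeasibleHyperTripSet 𝓛 (matchingFinpartition M hM.2) := by
  intro p hp
  rcases mem_matchingFinpartition_parts hp with hpM | ⟨v, rfl⟩
  · exact .inr (hM.1 hpM)
  · exact .inl ⟨v, rfl⟩

theorem filter_matchingFinpartition_parts {M : Finset (Finset V)}
    (hM : (M : Set (Finset V)).PairwiseDisjoint id) (hcard : ∀ L ∈ M, 2 ≤ L.card) :
    {p ∈ (matchingFinpartition M hM).parts | p.card ≠ 1} = M := by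
  ext p
  rw [mem_filter]
  constructor
  · rintro ⟨hp, hp1⟩
    rcases mem_matchingFinpartition_parts hp with hpM | ⟨v, rfl⟩
    · exact hpM
    · exact absurd (card_singleton v) hp1
  · intro hpM
    have hp2 := hcard p hpM
    have hp_ne : p ≠ ∅ := (card_pos.1 (by omega)).ne_empty
    rw [matchingFinpartition_parts]
    exact ⟨mem_union_left _ (mem_erase.2 ⟨hp_ne, hpM⟩), by omega⟩

theorem IsFeasibleHyperTripSet.isHyperMatching_filter {𝓛 : Finset (Finset V)}
    {P : Finpartition (univ : Finset V)} (hP : IsFeasibleHyperTripSet 𝓛 P) :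
    IsHyperMatching 𝓛 {p ∈ P.parts | p.card ≠ 1} := by
  refine ⟨fun p hp ↦ ?_, P.supIndep.pairwiseDisjoint.subset (filter_subset _ _)⟩
  rw [mem_filter] at hp
  rcases hP p hp.1 with ⟨v, rfl⟩ | hp𝓛
  · exact absurd (card_singleton v) hp.2
  · exact hp𝓛

end HyperTripSet

/-- kMTTC theorem: weighting each hyper-link `L ∈ 𝓛` by
`w^c L = (∑_{v ∈ L} c v) - ccomb L`, the minimum total travel cost over all feasible trip
sets equals `(∑ v, c v) - W`, where `W` is the maximum total weight of a matching of `𝓛`. -/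
theorem min_cost_eq_total_sub_max_weight_hypermatching
    {V : Type*} [Fintype V] [DecidableEq V] (𝓛 : Finset (Finset V))
    (h𝓛 : ∀ L ∈ 𝓛, 2 ≤ L.card)
    (c : V → ℝ) (ccomb : Finset V → ℝ) (W : ℝ)
    (hW : IsGreatest {x : ℝ | ∃ M : Finset (Finset V), IsHyperMatching 𝓛 M ∧
        ∑ L ∈ M, ((∑ v ∈ L, c v) - ccomb L) = x} W) :
    IsLeast {x : ℝ | ∃ P : Finpartition (univ : Finset V),
        IsFeasibleHyperTripSet 𝓛 P ∧ hyperTripSetCost c ccomb P = x}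
      ((∑ v : V, c v) - W) := by
  obtain ⟨⟨M, hM, rfl⟩, hmax⟩ := hW
  refine ⟨⟨matchingFinpartition M hM.2, hM.isFeasibleHyperTripSet, ?_⟩, ?_⟩
  · rw [hyperTripSetCost_eq_sum_sub_sum_filter,
      filter_matchingFinpartition_parts hM.2 fun L hL ↦ h𝓛 L (hM.1 hL)]
  · rintro _ ⟨P, hP, rfl⟩
    rw [hyperTripSetCost_eq_sum_sub_sum_filter]
    exact sub_le_sub_left (hmax ⟨_, hP.isHyperMatching_filter, rfl⟩) _
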